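/- arXiv:1011.1614 — 7 statements merged into one kernel-verified Lean document; each statement's English description precedes it below -/
import Mathlib

section
/- For all complex numbers t and z, the series ∑_{N=0}^∞ (−1)^N P_{2N+1}(t,z) / (2N+1)! converges and its sum equals sin(z − t). -/
/-- The Gould-Hopper polynomial (with `m = 3`). -/
noncomputable def ghP (N : ℕ) (t z : ℂ) : ℂ :=
  (N.factorial : ℂ) * ∑ k ∈ Finset.range (N / 3 + 1),
    t ^ k * z ^ (N - 3 * k) / ((k.factorial : ℂ) * ((N - 3 * k).factorial : ℂ))

/-!
The exponential generating function of the Gould-Hopper polynomials is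
`∑ P_N(t,z) x^N / N! = exp (t x³ + z x)`: it is the product of the series of `exp (t x³)` and
`exp (z x)`, regrouped along `N = 3k + m`. Since `i³ = -i`, at `x = ± i` it equals
`exp (± i (z - t))`, so half the difference of the two series, divided by `i`, is `sin (z - t)`;
only the odd powers of `i` survive in that difference.
-/

open Finset Nat Complex

def Nat.sigmaFinDivEquivProd (d : ℕ) (hd : 0 < d) : (Σ N : ℕ, Fin (N / d + 1)) ≃ ℕ × ℕ where
  toFun p := (p.2, p.1 - d * p.2)
  invFun q := ⟨d * q.1 + q.2, q.1, Nat.lt_succ_of_le <| (Nat.le_div_iff_mul_le hd).2 <| by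
    rw [mul_comm]; exact Nat.le_add_right _ _⟩
  left_inv := fun ⟨N, k⟩ => by
    have hN : d * k + (N - d * k) = N := Nat.add_sub_cancel' <|
      mul_comm (k : ℕ) d ▸ (Nat.le_div_iff_mul_le hd).1 (Nat.lt_succ_iff.1 k.2)
    exact Sigma.ext hN <| (Fin.heq_ext_iff (congrArg (· / d + 1) hN)).2 rfl
  right_inv := fun ⟨k, m⟩ => by simp

theorem hasSum_sum_range_div_mul_of_summable_norm {R : Type*} [NormedRing R] [CompleteSpace R]
    {f g : ℕ → R} (d : ℕ) (hd : 0 < d)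
    (hf : Summable fun n => ‖f n‖) (hg : Summable fun n => ‖g n‖) :
    HasSum (fun N => ∑ k ∈ range (N / d + 1), f k * g (N - d * k)) ((∑' n, f n) * ∑' n, g n) := by
  have hprod := hf.of_norm.hasSum.mul hg.of_norm.hasSum (summable_mul_of_summable_norm hf hg)
  refine ((Nat.sigmaFinDivEquivProd d hd).hasSum_iff.2 hprod).sigma fun N => ?_
  rw [← Fin.sum_univ_eq_sum_range (fun k => f k * g (N - d * k))]
  exact hasSum_fintype _

theorem HasSum.odd_of_neg_one_pow_mul {K : Type*} [Field K] [CharZero K] [TopologicalSpace K]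
    [IsTopologicalRing K] {f : ℕ → K} {a b : K} (ha : HasSum f a)
    (hb : HasSum (fun n => (-1) ^ n * f n) b) :
    HasSum (fun k => f (2 * k + 1)) ((a - b) / 2) := by
  have hodd (k : ℕ) : (f (2 * k + 1) - (-1) ^ (2 * k + 1) * f (2 * k + 1)) / 2 = f (2 * k + 1) := by
    rw [(odd_two_mul_add_one k).neg_one_pow]; ring
  have heven : ∀ n ∉ Set.range (fun k => 2 * k + 1), (f n - (-1) ^ n * f n) / 2 = 0 := by
    intro n hn
    obtain ⟨k, rfl⟩ : Even n := Nat.not_odd_iff_even.1 fun ⟨k, hk⟩ => hn ⟨k, hk.symm⟩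
    rw [Even.neg_one_pow ⟨k, rfl⟩]; ring
  exact ((Function.Injective.hasSum_iff (fun _ _ h => by omega) heven).2
    ((ha.sub hb).div_const 2)).congr_fun fun k => (hodd k).symm

theorem hasSum_ghP_mul_pow_div_factorial (t z x : ℂ) :
    HasSum (fun N => ghP N t z * x ^ N / N !) (exp (t * x ^ 3 + z * x)) := by
  have hexp (w : ℂ) : ∑' n, w ^ n / n ! = exp w := by
    rw [exp_eq_exp_ℂ]; exact (NormedSpace.expSeries_div_hasSum_exp w).tsum_eq
  have h := hasSum_sum_range_div_mul_of_summable_norm 3 three_pos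
    (NormedSpace.norm_expSeries_div_summable (t * x ^ 3))
    (NormedSpace.norm_expSeries_div_summable (z * x))
  rw [hexp, hexp, ← exp_add] at h
  refine h.congr_fun fun N => ?_
  rw [ghP, mul_sum, sum_mul, sum_div]
  refine sum_congr rfl fun k hk => ?_
  obtain ⟨m, rfl⟩ := Nat.exists_eq_add_of_le (show 3 * k ≤ N by have := mem_range.1 hk; omega)
  have hfac : ((3 * k + m) ! : ℂ) ≠ 0 := Nat.cast_ne_zero.2 (factorial_ne_zero _)
  rw [Nat.add_sub_cancel_left, pow_add, pow_mul]
  field_simp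
  ring

/-- The series `∑_{N=0}^∞ (−1)^N P_{2N+1}(t,z) / (2N+1)!` converges to `sin(z − t)`. -/
theorem gouldHopper_sin_sum (t z : ℂ) :
    HasSum (fun N : ℕ => (-1) ^ N * ghP (2 * N + 1) t z / ((2 * N + 1).factorial : ℂ))
      (Complex.sin (z - t)) := by
  have hI : HasSum (fun N => ghP N t z * I ^ N / N !) (exp ((z - t) * I)) := by
    convert hasSum_ghP_mul_pow_div_factorial t z I using 2
    rw [I_pow_three]; ring
  have hnegI : HasSum (fun N => (-1) ^ N * (ghP N t z * I ^ N / N !)) (exp (-(z - t) * I)) := by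
    convert hasSum_ghP_mul_pow_div_factorial t z (-I) using 1
    · ext N; rw [neg_pow]; ring
    · rw [neg_pow, I_pow_three]; ring_nf
  have hsin : (exp ((z - t) * I) - exp (-(z - t) * I)) / 2 / I = sin (z - t) := by
    rw [div_div, div_eq_iff (by simp)]
    linear_combination -I * two_sin (z - t) - (exp (-(z - t) * I) - exp ((z - t) * I)) * I_sq
  rw [← hsin]
  refine ((hI.odd_of_neg_one_pow_mul hnegI).div_const I).congr_fun fun N => ?_
  rw [pow_succ, pow_mul, I_sq]
  field_simp
end

section
/- Let N ≥ 3 and let q_1, …, q_N : I → ℂ be differentiable functions on an open real interval I that are pairwise distinct at every t ∈ I, and suppose the monic polynomial ℙ_N(t,z) = ∏_{j=1}^N (z − q_j(t)) satisfies ∂_t ℙ_N(t,z) = ∂_z³ ℙ_N(t,z) for all t ∈ I and all complex z. Then the roots obey the dynamics q̇_j(t) = −6 · ∑_{m<n, m≠j, n≠j} 1 / [(q_j(t) − q_m(t)) (q_j(t) − q_n(t))] for every j = 1, …, N, where the sum is over all pairs m < n with m ≠ j and n ≠ j. -/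
/-!
Evaluate `∂_t ℙ_N = ∂_z³ ℙ_N` at the root `z = q_j(t)`. On the left only the factor `z - q_j`
survives, giving `-q̇_j ∏_{k ≠ j} (q_j - q_k)`. On the right write `ℙ_N = (z - q_j) Q`; then
`∂_z³ ℙ_N (q_j) = 3 Q''(q_j)` and
`Q''(q_j) = ∏_{k ≠ j} (q_j - q_k) · ∑_{m ≠ n} 1 / ((q_j - q_m)(q_j - q_n))`,
where the symmetric sum over ordered pairs is twice the sum over `m < n`. The product is nonzero
since the roots are distinct, so it cancels.
-/

open Finset Polynomial

namespace Finset

theorem sum_sum_erase_eq_offDiag {ι M : Type*} [DecidableEq ι] [AddCommMonoid M]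
    (s : Finset ι) (f : ι → ι → M) :
    ∑ i ∈ s, ∑ k ∈ s.erase i, f i k = ∑ p ∈ s.offDiag, f p.1 p.2 := by
  refine (sum_finset_product' _ _ _ fun p => ?_).symm
  simp [and_comm, ne_comm]

theorem sum_offDiag_eq_two_nsmul_of_symm {ι M : Type*} [LinearOrder ι] [AddCommMonoid M]
    (s : Finset ι) {f : ι → ι → M} (hf : ∀ i k, f i k = f k i) :
    ∑ p ∈ s.offDiag, f p.1 p.2 = 2 • ∑ p ∈ s.offDiag with p.1 < p.2, f p.1 p.2 := by
  rw [← sum_filter_add_sum_filter_not _ (fun p : ι × ι => p.1 < p.2), two_nsmul]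
  congr 1
  refine sum_equiv (Equiv.prodComm ι ι) (fun p => ?_) (fun p _ => hf _ _)
  simp only [mem_filter, mem_offDiag, Equiv.prodComm_apply, Prod.fst_swap, Prod.snd_swap]
  constructor
  · rintro ⟨⟨hi, hk, hne⟩, hlt⟩
    exact ⟨⟨hk, hi, Ne.symm hne⟩, lt_of_le_of_ne (not_lt.1 hlt) (Ne.symm hne)⟩
  · rintro ⟨⟨hk, hi, hne⟩, hlt⟩
    exact ⟨⟨hi, hk, Ne.symm hne⟩, not_lt.2 hlt.le⟩

end Finset

namespace Polynomial

theorem derivative_prod_X_sub_C {ι R : Type*} [DecidableEq ι] [CommRing R] (s : Finset ι)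
    (c : ι → R) :
    derivative (∏ i ∈ s, (X - C (c i))) = ∑ i ∈ s, ∏ k ∈ s.erase i, (X - C (c k)) := by
  simp [derivative_prod_finset]

theorem eval_derivative_derivative_prod_X_sub_C {ι K : Type*} [DecidableEq ι] [Field K]
    (s : Finset ι) (c : ι → K) {x : K} (hx : ∀ i ∈ s, x ≠ c i) :
    (derivative (derivative (∏ i ∈ s, (X - C (c i))))).eval x =
      (∏ i ∈ s, (x - c i)) * ∑ m ∈ s, ∑ n ∈ s.erase m, 1 / ((x - c m) * (x - c n)) := by
  have hx0 : ∀ i ∈ s, x - c i ≠ 0 := fun i hi => sub_ne_zero.2 (hx i hi)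
  simp only [derivative_prod_X_sub_C, derivative_sum, eval_finsetSum, eval_prod, eval_sub,
    eval_X, eval_C, mul_sum]
  refine sum_congr rfl fun m hm => sum_congr rfl fun n hn => ?_
  rw [← mul_prod_erase s _ hm, ← mul_prod_erase (s.erase m) _ hn]
  field_simp [hx0 m hm, hx0 n (mem_of_mem_erase hn)]

theorem iterate_derivative_X_sub_C_mul {R : Type*} [CommRing R] (a : R) (p : R[X]) (n : ℕ) :
    derivative^[n + 1] ((X - C a) * p) =
      (X - C a) * derivative^[n + 1] p + (n + 1) • derivative^[n] p := by
  induction n with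
  | zero => simp [derivative_mul, add_comm]
  | succ n ih =>
    rw [Function.iterate_succ_apply', ih, Function.iterate_succ_apply' _ (n + 1)]
    simp only [derivative_add, derivative_mul, derivative_sub, derivative_X, derivative_C,
      sub_zero, one_mul, derivative_smul, ← Function.iterate_succ_apply' derivative]
    rw [succ_nsmul _ (n + 1)]
    abel

theorem eval_iterate_derivative_X_sub_C_mul {R : Type*} [CommRing R] (a : R) (p : R[X]) (n : ℕ) :
    (derivative^[n + 1] ((X - C a) * p)).eval a = (n + 1) * (derivative^[n] p).eval a := by
  simp [iterate_derivative_X_sub_C_mul]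

theorem iteratedDeriv_eval {𝕜 : Type*} [NontriviallyNormedField 𝕜] (p : 𝕜[X]) (n : ℕ) :
    iteratedDeriv n (fun x => p.eval x) = fun x => (derivative^[n] p).eval x := by
  induction n with
  | zero => simp
  | succ n ih =>
    rw [iteratedDeriv_succ, ih, Function.iterate_succ_apply']
    funext x
    exact Polynomial.deriv _

end Polynomial

theorem deriv_finsetProd_of_apply_eq_zero {ι 𝕜 𝔸 : Type*} [DecidableEq ι]
    [NontriviallyNormedField 𝕜] [NormedCommRing 𝔸] [NormedAlgebra 𝕜 𝔸]
    {u : Finset ι} {f : ι → 𝕜 → 𝔸} {x : 𝕜} {j : ι} (hj : j ∈ u)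
    (hf : ∀ i ∈ u, DifferentiableAt 𝕜 (f i) x) (hfj : f j x = 0) :
    deriv (∏ i ∈ u, f i ·) x = (∏ i ∈ u.erase j, f i x) * deriv (f j) x := by
  rw [deriv_fun_finsetProd hf, sum_eq_single_of_mem j hj, smul_eq_mul]
  intro i _ hij
  rw [prod_eq_zero (mem_erase.2 ⟨Ne.symm hij, hj⟩) hfj, zero_smul]

theorem iteratedDeriv_three_prod_sub_at_root {ι 𝕜 : Type*} [LinearOrder ι]
    [NontriviallyNormedField 𝕜] (s : Finset ι) (c : ι → 𝕜) {j : ι} (hj : j ∈ s)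
    (hc : ∀ k ∈ s.erase j, c j ≠ c k) :
    iteratedDeriv 3 (fun w => ∏ k ∈ s, (w - c k)) (c j) =
      6 * (∏ k ∈ s.erase j, (c j - c k)) *
        ∑ p ∈ (s.erase j).offDiag with p.1 < p.2, 1 / ((c j - c p.1) * (c j - c p.2)) := by
  have hpoly : (fun w => ∏ k ∈ s, (w - c k)) = fun w => (∏ k ∈ s, (X - C (c k))).eval w := by
    funext w
    simp [eval_prod]
  rw [show 3 = 2 + 1 from rfl, hpoly, iteratedDeriv_eval, ← mul_prod_erase s _ hj]
  beta_reduce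
  rw [eval_iterate_derivative_X_sub_C_mul,
    Function.iterate_succ_apply', Function.iterate_one,
    eval_derivative_derivative_prod_X_sub_C _ _ hc, sum_sum_erase_eq_offDiag,
    sum_offDiag_eq_two_nsmul_of_symm (f := fun m n => 1 / ((c j - c m) * (c j - c n))) _
      fun m n => by rw [mul_comm]]
  push_cast
  ring

theorem root_dynamics_of_sigma_flow_general (N : ℕ) (a b : ℝ)
    (q : Fin N → ℝ → ℂ)
    (hdiff : ∀ j, ∀ t ∈ Set.Ioo a b, DifferentiableAt ℝ (q j) t)
    (hdist : ∀ t ∈ Set.Ioo a b, ∀ j k : Fin N, j ≠ k → q j t ≠ q k t)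
    (hP : ∀ t ∈ Set.Ioo a b, ∀ z : ℂ,
      deriv (fun s : ℝ => ∏ j, (z - q j s)) t =
        iteratedDeriv 3 (fun w : ℂ => ∏ j, (w - q j t)) z) :
    ∀ t ∈ Set.Ioo a b, ∀ j : Fin N,
      deriv (q j) t =
        -6 * ∑ p ∈ Finset.univ.filter
            (fun p : Fin N × Fin N => p.1 < p.2 ∧ p.1 ≠ j ∧ p.2 ≠ j),
          1 / ((q j t - q p.1 t) * (q j t - q p.2 t)) := by
  intro t ht j
  have hroot : ∀ k ∈ univ.erase j, q j t ≠ q k t :=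
    fun k hk => hdist t ht j k (ne_of_mem_erase hk).symm
  have hD : ∏ k ∈ univ.erase j, (q j t - q k t) ≠ 0 :=
    prod_ne_zero_iff.2 fun k hk => sub_ne_zero.2 (hroot k hk)
  have hpairs : univ.filter (fun p : Fin N × Fin N => p.1 < p.2 ∧ p.1 ≠ j ∧ p.2 ≠ j) =
      (univ.erase j).offDiag.filter (fun p => p.1 < p.2) := by
    ext p
    simp only [mem_filter, mem_univ, true_and, mem_offDiag, mem_erase]
    grind
  have key := hP t ht (q j t)
  rw [deriv_finsetProd_of_apply_eq_zero (mem_univ j) (fun i _ => (hdiff i t ht).const_sub _)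
      (sub_self _), deriv_const_sub,
    iteratedDeriv_three_prod_sub_at_root univ (fun k => q k t) (mem_univ j) hroot] at key
  rw [hpairs]
  apply mul_left_cancel₀ hD
  linear_combination -key

/-- If the roots `q_1, …, q_N` of the monic polynomial
`ℙ_N(t,z) = ∏_j (z − q_j(t))` are differentiable and pairwise distinct on an open
interval `I`, and `ℙ_N` satisfies `∂_t ℙ_N = ∂_z³ ℙ_N`, then the roots obey
`q̇_j = −6 ∑_{m<n, m≠j, n≠j} 1 / [(q_j − q_m)(q_j − q_n)]`. -/
theorem root_dynamics_of_sigma_flow (N : ℕ) (hN : 3 ≤ N) (a b : ℝ)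
    (q : Fin N → ℝ → ℂ)
    (hdiff : ∀ j, ∀ t ∈ Set.Ioo a b, DifferentiableAt ℝ (q j) t)
    (hdist : ∀ t ∈ Set.Ioo a b, ∀ j k : Fin N, j ≠ k → q j t ≠ q k t)
    (hP : ∀ t ∈ Set.Ioo a b, ∀ z : ℂ,
      deriv (fun s : ℝ => ∏ j, (z - q j s)) t =
        iteratedDeriv 3 (fun w : ℂ => ∏ j, (w - q j t)) z) :
    ∀ t ∈ Set.Ioo a b, ∀ j : Fin N,
      deriv (q j) t =
        -6 * ∑ p ∈ Finset.univ.filter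
            (fun p : Fin N × Fin N => p.1 < p.2 ∧ p.1 ≠ j ∧ p.2 ≠ j),
          1 / ((q j t - q p.1 t) * (q j t - q p.2 t)) :=
  root_dynamics_of_sigma_flow_general N a b q hdiff hdist hP
end

section
/- Let N ≥ 3 and let q_1, …, q_N : I → ℂ be differentiable functions on an open real interval I that are pairwise distinct at every t ∈ I and satisfy the root dynamics q̇_j = −6 · ∑_{m<n, m≠j, n≠j} 1 / [(q_j − q_m)(q_j − q_n)] for each j. Then ∑_{i=1}^N q_i(t) and ∑_{i=1}^N q_i(t)² are conserved quantities, i.e. both have zero derivative and are constant on I. -/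
/-!
With `R_j(x) = rootDrift x j = ∑_{m<n, m,n≠j} 1/((x_j - x_m)(x_j - x_n))` the dynamics reads
`q̇_j = -6 R_j(q)`.
Regrouping `∑_j w_j R_j(x)` by triples `a < b < c` turns it into a sum of second divided
differences `w_a/((x_a-x_b)(x_a-x_c)) + w_b/((x_b-x_a)(x_b-x_c)) + w_c/((x_c-x_a)(x_c-x_b))`,
which vanish whenever `w` is an affine function of `x`. The weights `1` and `x_j` give
`d/dt ∑ q_i = 0` and `d/dt ∑ q_i² = 0`.
-/

open Finset

section

variable {ι : Type*} [Fintype ι] [LinearOrder ι]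

def rootDrift {K : Type*} [Field K] (x : ι → K) (j : ι) : K :=
  ∑ p ∈ univ.filter (fun p : ι × ι => p.1 < p.2 ∧ p.1 ≠ j ∧ p.2 ≠ j),
    1 / ((x j - x p.1) * (x j - x p.2))

theorem sum_sum_filter_lt_ne_ne {M : Type*} [AddCommMonoid M] (F : ι → ι → ι → M) :
    ∑ j, ∑ p ∈ univ.filter (fun p : ι × ι => p.1 < p.2 ∧ p.1 ≠ j ∧ p.2 ≠ j),
        F j p.1 p.2 =
      ∑ x ∈ univ.filter (fun x : ι × ι × ι => x.1 < x.2.1 ∧ x.2.1 < x.2.2),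
        (F x.1 x.2.1 x.2.2 + F x.2.1 x.1 x.2.2 + F x.2.2 x.1 x.2.1) := by
  have hσ :
      ∑ x : ι × ι × ι, (if x.1 < x.2.1 ∧ x.2.1 < x.2.2 then F x.2.1 x.1 x.2.2 else 0) =
      ∑ x : ι × ι × ι, if x.2.1 < x.1 ∧ x.1 < x.2.2 then F x.1 x.2.1 x.2.2 else 0 :=
    Fintype.sum_equiv ⟨fun x => (x.2.1, x.1, x.2.2), fun x => (x.2.1, x.1, x.2.2),
      fun _ => rfl, fun _ => rfl⟩ _ _ fun _ => rfl
  have hτ :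
      ∑ x : ι × ι × ι, (if x.1 < x.2.1 ∧ x.2.1 < x.2.2 then F x.2.2 x.1 x.2.1 else 0) =
      ∑ x : ι × ι × ι, if x.2.1 < x.2.2 ∧ x.2.2 < x.1 then F x.1 x.2.1 x.2.2 else 0 :=
    Fintype.sum_equiv ⟨fun x => (x.2.2, x.1, x.2.1), fun x => (x.2.1, x.2.2, x.1),
      fun _ => rfl, fun _ => rfl⟩ _ _ fun _ => rfl
  simp only [sum_filter, sum_add_distrib, hσ, hτ]
  rw [← Fintype.sum_prod_type', ← sum_add_distrib, ← sum_add_distrib]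
  -- `m < n` avoiding `j` means exactly one of `j < m < n`, `m < j < n`, `m < n < j`.
  exact sum_congr rfl fun _ _ => by split_ifs <;> grind

theorem cyclic_sum_affine_div_eq_zero {K : Type*} [Field K] {a b c : K}
    (hab : a ≠ b) (hac : a ≠ c) (hbc : b ≠ c) (u v : K) :
    (u + v * a) * (1 / ((a - b) * (a - c))) + (u + v * b) * (1 / ((b - a) * (b - c))) +
      (u + v * c) * (1 / ((c - a) * (c - b))) = 0 := by
  have := sub_ne_zero.mpr hab
  have := sub_ne_zero.mpr hac
  have := sub_ne_zero.mpr hbc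
  rw [← neg_sub a b, ← neg_sub a c, ← neg_sub b c]
  field_simp
  ring

theorem sum_affine_mul_rootDrift_eq_zero {K : Type*} [Field K] {x : ι → K}
    (hx : Function.Injective x) (u v : K) :
    ∑ j, (u + v * x j) * rootDrift x j = 0 := by
  simp_rw [rootDrift, mul_sum]
  rw [sum_sum_filter_lt_ne_ne fun j m n => (u + v * x j) * (1 / ((x j - x m) * (x j - x n)))]
  refine sum_eq_zero fun y hy => ?_
  obtain ⟨hab, hbc⟩ := (mem_filter.mp hy).2
  exact cyclic_sum_affine_div_eq_zero (hx.ne hab.ne) (hx.ne (hab.trans hbc).ne) (hx.ne hbc.ne) _ _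

end

theorem root_dynamics_conserved_general (N : ℕ) (a b : ℝ)
    (q : Fin N → ℝ → ℂ)
    (hdiff : ∀ j, ∀ t ∈ Set.Ioo a b, DifferentiableAt ℝ (q j) t)
    (hdist : ∀ t ∈ Set.Ioo a b, ∀ j k : Fin N, j ≠ k → q j t ≠ q k t)
    (hdyn : ∀ t ∈ Set.Ioo a b, ∀ j : Fin N,
      deriv (q j) t =
        -6 * ∑ p ∈ Finset.univ.filter
            (fun p : Fin N × Fin N => p.1 < p.2 ∧ p.1 ≠ j ∧ p.2 ≠ j),
          1 / ((q j t - q p.1 t) * (q j t - q p.2 t))) :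
    (∀ t ∈ Set.Ioo a b, deriv (fun s : ℝ => ∑ i, q i s) t = 0) ∧
    (∀ t ∈ Set.Ioo a b, deriv (fun s : ℝ => ∑ i, (q i s) ^ 2) t = 0) ∧
    (∀ t₁ ∈ Set.Ioo a b, ∀ t₂ ∈ Set.Ioo a b,
      (∑ i, q i t₁) = (∑ i, q i t₂) ∧ (∑ i, (q i t₁) ^ 2) = (∑ i, (q i t₂) ^ 2)) := by
  have hinj : ∀ t ∈ Set.Ioo a b, Function.Injective (q · t) := fun t ht j k h =>
    by_contra fun hne => hdist t ht j k hne h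
  have hdrift : ∀ t ∈ Set.Ioo a b, ∀ j, deriv (q j) t = -6 * rootDrift (q · t) j := hdyn
  have hsum : ∀ t ∈ Set.Ioo a b, deriv (fun s : ℝ => ∑ i, q i s) t = 0 := by
    intro t ht
    calc deriv (fun s : ℝ => ∑ i, q i s) t
        = -6 * ∑ j, (1 + 0 * q j t) * rootDrift (q · t) j := by
          rw [deriv_fun_sum fun i _ => hdiff i t ht, mul_sum]
          exact sum_congr rfl fun j _ => by rw [hdrift t ht]; ring
      _ = 0 := by rw [sum_affine_mul_rootDrift_eq_zero (hinj t ht), mul_zero]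
  have hsq : ∀ t ∈ Set.Ioo a b, deriv (fun s : ℝ => ∑ i, (q i s) ^ 2) t = 0 := by
    intro t ht
    calc deriv (fun s : ℝ => ∑ i, (q i s) ^ 2) t
        = -12 * ∑ j, (0 + 1 * q j t) * rootDrift (q · t) j := by
          rw [deriv_fun_sum fun i _ => (hdiff i t ht).fun_pow 2, mul_sum]
          refine sum_congr rfl fun j _ => ?_
          rw [deriv_fun_pow (hdiff j t ht), hdrift t ht]
          ring
      _ = 0 := by rw [sum_affine_mul_rootDrift_eq_zero (hinj t ht), mul_zero]
  refine ⟨hsum, hsq, fun t₁ h₁ t₂ h₂ => ⟨?_, ?_⟩⟩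
  · exact isOpen_Ioo.is_const_of_deriv_eq_zero isPreconnected_Ioo
      (fun t ht => (DifferentiableAt.fun_sum fun i _ => hdiff i t ht).differentiableWithinAt)
      hsum h₁ h₂
  · exact isOpen_Ioo.is_const_of_deriv_eq_zero isPreconnected_Ioo
      (fun t ht =>
        (DifferentiableAt.fun_sum fun i _ => (hdiff i t ht).pow 2).differentiableWithinAt)
      hsq h₁ h₂

/-- If the pairwise-distinct differentiable functions `q_1, …, q_N` on an open
interval `I` satisfy the root dynamics
`q̇_j = −6 ∑_{m<n, m≠j, n≠j} 1 / [(q_j − q_m)(q_j − q_n)]`, then `∑ q_i` and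
`∑ q_i²` are conserved: they have zero derivative and are constant on `I`. -/
theorem root_dynamics_conserved (N : ℕ) (hN : 3 ≤ N) (a b : ℝ)
    (q : Fin N → ℝ → ℂ)
    (hdiff : ∀ j, ∀ t ∈ Set.Ioo a b, DifferentiableAt ℝ (q j) t)
    (hdist : ∀ t ∈ Set.Ioo a b, ∀ j k : Fin N, j ≠ k → q j t ≠ q k t)
    (hdyn : ∀ t ∈ Set.Ioo a b, ∀ j : Fin N,
      deriv (q j) t =
        -6 * ∑ p ∈ Finset.univ.filter
            (fun p : Fin N × Fin N => p.1 < p.2 ∧ p.1 ≠ j ∧ p.2 ≠ j),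
          1 / ((q j t - q p.1 t) * (q j t - q p.2 t))) :
    (∀ t ∈ Set.Ioo a b, deriv (fun s : ℝ => ∑ i, q i s) t = 0) ∧
    (∀ t ∈ Set.Ioo a b, deriv (fun s : ℝ => ∑ i, (q i s) ^ 2) t = 0) ∧
    (∀ t₁ ∈ Set.Ioo a b, ∀ t₂ ∈ Set.Ioo a b,
      (∑ i, q i t₁) = (∑ i, q i t₂) ∧ (∑ i, (q i t₁) ^ 2) = (∑ i, (q i t₂) ^ 2)) :=
  root_dynamics_conserved_general N a b q hdiff hdist hdyn
end

section
/- Let N ≥ 1 and let a_1, …, a_N be complex numbers (the initial roots). Define the constants C_k = (−1)^k e_k(a_1, …, a_N) for k = 1, …, N, where e_k is the k-th elementary symmetric polynomial, and set ℙ_N(t,z) = P_N(t,z) + C_1 P_{N−1}(t,z) + ⋯ + C_N P_0(t,z). Then ℙ_N satisfies ∂_t ℙ_N = ∂_z³ ℙ_N for all complex t and z, and ℙ_N(0,z) = ∏_{i=1}^N (z − a_i); hence ℙ_N solves the initial value problem for the σ-flow with initial roots a_1, …, a_N. -/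
/-- The `k`-th elementary symmetric polynomial of `a_1, …, a_N`. -/
noncomputable def esymmOf {N : ℕ} (a : Fin N → ℂ) (k : ℕ) : ℂ :=
  ∑ S ∈ Finset.powersetCard k (Finset.univ : Finset (Fin N)), ∏ i ∈ S, a i

open Finset Nat

/-- The falling factorial `M.descFactorial (3 * k) = M! / (M - 3k)!` vanishes once `3k > M`, so
the sum may be extended to any range; the truncated exponent `M - 3 * k` is then harmless. -/
theorem ghP_eq_sum_descFactorial (M : ℕ) {K : ℕ} (hK : M / 3 < K) (t z : ℂ) :
    ghP M t z =
      ∑ k ∈ range K, (M.descFactorial (3 * k) : ℂ) * (t ^ k / k !) * z ^ (M - 3 * k) := by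
  rw [ghP, mul_sum]
  refine (sum_congr rfl fun k hk => ?_).trans
    (sum_subset (range_subset_range.2 hK) fun k _ hk => ?_)
  · have hk3 : 3 * k ≤ M := by simp only [mem_range] at hk; omega
    rw [← factorial_mul_descFactorial hk3]
    have := cast_ne_zero (R := ℂ) |>.2 (M - 3 * k).factorial_ne_zero
    push_cast
    field_simp
  · rw [descFactorial_eq_zero_iff_lt.2 (by simp only [mem_range] at hk; omega)]
    simp

theorem hasDerivAt_ghP_right (M : ℕ) (t z : ℂ) :
    HasDerivAt (ghP M t) (M * ghP (M - 1) t z) z := by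
  have hK : M / 3 < M / 3 + 1 := lt_add_one _
  have hK' : (M - 1) / 3 < M / 3 + 1 := by omega
  simp only [funext (ghP_eq_sum_descFactorial M hK t), ghP_eq_sum_descFactorial (M - 1) hK',
    mul_sum]
  refine HasDerivAt.fun_sum fun k _ => ?_
  have hdesc : M.descFactorial (3 * k) * (M - 3 * k) = M * (M - 1).descFactorial (3 * k) := by
    rcases M with _ | m
    · rcases k with _ | k <;> simp
    · rw [mul_comm, ← descFactorial_succ, succ_descFactorial_succ, Nat.add_sub_cancel]
  have hc := congrArg (Nat.cast (R := ℂ)) hdesc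
  push_cast at hc
  refine ((hasDerivAt_pow (M - 3 * k) z).const_mul
    ((M.descFactorial (3 * k) : ℂ) * (t ^ k / k !))).congr_deriv ?_
  rw [Nat.sub_right_comm]
  linear_combination (t ^ k / k ! * z ^ (M - 1 - 3 * k)) * hc

theorem hasDerivAt_ghP_left (M : ℕ) (t z : ℂ) :
    HasDerivAt (fun s => ghP M s z) (M.descFactorial 3 * ghP (M - 3) t z) t := by
  have hK : M / 3 < M / 3 + 1 + 1 := by omega
  have hK' : (M - 3) / 3 < M / 3 + 1 := by omega
  simp only [ghP_eq_sum_descFactorial M hK, ghP_eq_sum_descFactorial (M - 3) hK', mul_sum]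
  refine (HasDerivAt.fun_sum fun k _ =>
    (((hasDerivAt_pow k t).div_const (k ! : ℂ)).const_mul _).mul_const _).congr_deriv ?_
  rw [sum_range_succ']
  simp only [CharP.cast_eq_zero, zero_mul, zero_div, mul_zero, add_zero]
  refine sum_congr rfl fun k _ => ?_
  have hdesc := descFactorial_mul_descFactorial (n := M) (show 3 ≤ 3 * (k + 1) by omega)
  rw [show 3 * (k + 1) - 3 = 3 * k by omega] at hdesc
  have hc := congrArg (Nat.cast (R := ℂ)) hdesc
  push_cast at hc
  rw [← hc, factorial_succ, show M - 3 * (k + 1) = M - 3 - 3 * k by omega]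
  have := cast_ne_zero (R := ℂ) |>.2 k.factorial_ne_zero
  push_cast
  field_simp

theorem iteratedDeriv_ghP_right (n M : ℕ) (t : ℂ) :
    iteratedDeriv n (ghP M t) = fun z => (M.descFactorial n : ℂ) * ghP (M - n) t z := by
  induction n with
  | zero => simp
  | succ n ih =>
    ext z
    rw [iteratedDeriv_succ, ih, ((hasDerivAt_ghP_right (M - n) t z).const_mul _).deriv,
      descFactorial_succ, Nat.sub_sub]
    push_cast
    ring

theorem ghP_zero_left (M : ℕ) (z : ℂ) : ghP M 0 z = z ^ M := by
  simp [ghP_eq_sum_descFactorial M (lt_add_one (M / 3)), sum_range_succ']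

theorem prod_sub_eq_sum_esymmOf {N : ℕ} (a : Fin N → ℂ) (z : ℂ) :
    ∏ i, (z - a i) = ∑ k ∈ range (N + 1), (-1) ^ k * esymmOf a k * z ^ (N - k) := by
  have h := congrArg (Polynomial.eval z) (Multiset.prod_X_sub_X_eq_sum_esymm (univ.val.map a))
  simp only [Multiset.card_map, card_val, Finset.card_fin, Multiset.map_map,
    Polynomial.eval_multiset_prod, Polynomial.eval_finsetSum, Function.comp_def,
    Polynomial.eval_sub, Polynomial.eval_X, Polynomial.eval_C, Polynomial.eval_mul,
    Polynomial.eval_pow, Polynomial.eval_neg, Polynomial.eval_one, esymm_map_val] at h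
  simp only [mul_assoc, esymmOf]
  exact h

theorem deriv_left_ghP_eq_iteratedDeriv_right (M : ℕ) (t z : ℂ) :
    deriv (fun s => ghP M s z) t = iteratedDeriv 3 (ghP M t) z := by
  rw [(hasDerivAt_ghP_left M t z).deriv, iteratedDeriv_ghP_right]

theorem deriv_left_sum_ghP_eq_iteratedDeriv_right {ι : Type*} (s : Finset ι) (c : ι → ℂ)
    (m : ι → ℕ) (t z : ℂ) :
    deriv (fun s' => ∑ i ∈ s, c i * ghP (m i) s' z) t =
      iteratedDeriv 3 (fun w => ∑ i ∈ s, c i * ghP (m i) t w) z := by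
  have hsmooth (i : ι) : ContDiffAt ℂ 3 (fun w => c i * ghP (m i) t w) z :=
    (Differentiable.contDiff fun w =>
      ((hasDerivAt_ghP_right (m i) t w).const_mul (c i)).differentiableAt).contDiffAt
  rw [(HasDerivAt.fun_sum fun i _ => (hasDerivAt_ghP_left (m i) t z).const_mul (c i)).deriv,
    iteratedDeriv_fun_sum fun i _ => hsmooth i]
  refine sum_congr rfl fun i _ => ?_
  rw [iteratedDeriv_const_mul_field, ← deriv_left_ghP_eq_iteratedDeriv_right,
    (hasDerivAt_ghP_left (m i) t z).deriv]

theorem sigma_flow_initial_value_problem_general (N : ℕ) (a : Fin N → ℂ)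
    (C : ℕ → ℂ) (hC : ∀ k, C k = (-1) ^ k * esymmOf a k)
    (P : ℂ → ℂ → ℂ)
    (hP : ∀ t z : ℂ, P t z = ghP N t z + ∑ k ∈ Finset.Icc 1 N, C k * ghP (N - k) t z) :
    (∀ t z : ℂ,
      deriv (fun s : ℂ => P s z) t = iteratedDeriv 3 (fun w : ℂ => P t w) z) ∧
    (∀ z : ℂ, P 0 z = ∏ i, (z - a i)) := by
  have hP_sum (t z : ℂ) :
      P t z = ∑ k ∈ range (N + 1), (-1) ^ k * esymmOf a k * ghP (N - k) t z := by
    rw [hP, range_eq_Ico, sum_eq_sum_Ico_succ_bot (by omega : 0 < N + 1), zero_add,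
      Ico_add_one_right_eq_Icc]
    simp [hC, esymmOf]
  refine ⟨fun t z => ?_, fun z => ?_⟩
  · simp only [hP_sum]
    exact deriv_left_sum_ghP_eq_iteratedDeriv_right _ _ _ t z
  · simp only [hP_sum, prod_sub_eq_sum_esymmOf, ghP_zero_left]

/-- With `C_k = (−1)^k e_k(a_1, …, a_N)` and
`ℙ_N(t,z) = P_N(t,z) + C_1 P_{N−1}(t,z) + ⋯ + C_N P_0(t,z)`, the polynomial `ℙ_N`
satisfies `∂_t ℙ_N = ∂_z³ ℙ_N` and `ℙ_N(0,z) = ∏_i (z − a_i)`: it solves the initial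
value problem for the σ-flow with initial roots `a_1, …, a_N`. -/
theorem sigma_flow_initial_value_problem (N : ℕ) (hN : 1 ≤ N) (a : Fin N → ℂ)
    (C : ℕ → ℂ) (hC : ∀ k, C k = (-1) ^ k * esymmOf a k)
    (P : ℂ → ℂ → ℂ)
    (hP : ∀ t z : ℂ, P t z = ghP N t z + ∑ k ∈ Finset.Icc 1 N, C k * ghP (N - k) t z) :
    (∀ t z : ℂ,
      deriv (fun s : ℂ => P s z) t = iteratedDeriv 3 (fun w : ℂ => P t w) z) ∧
    (∀ z : ℂ, P 0 z = ∏ i, (z - a i)) :=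
  sigma_flow_initial_value_problem_general N a C hC P hP
end

section
/- Fix N ≥ 1 and a complex number t, and let X(t) be the N×N complex matrix with entries X_{i,i+1} = 1 for i = 1, …, N−1, X_{i,i−2} = −3t(i−1)(i−2) for i = 3, …, N, and all other entries zero. Then the characteristic polynomial of X(t) equals the Gould-Hopper polynomial: det(z·I_N − X(t)) = P_N(t,z) for all complex z. -/
/-- The companion-type matrix `X(t)` (rows/columns indexed by `0, …, N−1`, i.e.
the paper's `1, …, N` shifted by one): superdiagonal entries are `1`, the entries
two below the diagonal are `−3t(i−1)(i−2)` (paper indexing, i.e. `−3t·i·(i−1)` in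
0-based indexing), and all other entries vanish. -/
noncomputable def ghX (N : ℕ) (t : ℂ) : Matrix (Fin N) (Fin N) ℂ :=
  fun i j =>
    if (j : ℕ) = (i : ℕ) + 1 then 1
    else if (j : ℕ) + 2 = (i : ℕ) then -3 * t * ((i : ℕ) : ℂ) * (((i : ℕ) : ℂ) - 1)
    else 0

open Finset Matrix

theorem Nat.succ_descFactorial_succ_eq_add (n k : ℕ) :
    (n + 1).descFactorial (k + 1) = n.descFactorial (k + 1) + (k + 1) * n.descFactorial k := by
  rw [Nat.succ_descFactorial_succ, Nat.descFactorial_succ]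
  rcases le_or_gt k n with hk | hk
  · rw [← add_mul]; congr 1; omega
  · simp [Nat.descFactorial_eq_zero_iff_lt.mpr hk]

theorem Nat.descFactorial_add_three (n k : ℕ) :
    (n + 3).descFactorial (3 * k + 3) =
      (n + 2).descFactorial (3 * k + 3) +
        3 * (k + 1) * ((n + 2) * (n + 1) * n.descFactorial (3 * k)) := by
  rw [Nat.succ_descFactorial_succ_eq_add (n + 2) (3 * k + 2),
    Nat.succ_descFactorial_succ (n + 1) (3 * k + 1), Nat.succ_descFactorial_succ n (3 * k)]
  ring

theorem Nat.descFactorial_mul_pow_succ_sub {K : Type*} [Semiring K] (N j : ℕ) (z : K) :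
    (N.descFactorial j : K) * z ^ (N + 1 - j) = N.descFactorial j * (z * z ^ (N - j)) := by
  rcases le_or_gt j N with hj | hj
  · rw [← _root_.pow_succ', Nat.sub_add_comm hj]
  · simp [Nat.descFactorial_eq_zero_iff_lt.mpr hj]

theorem Fin.val_succAbove {n : ℕ} (p : Fin (n + 1)) (i : Fin n) :
    (p.succAbove i : ℕ) = if (i : ℕ) < p then (i : ℕ) else i + 1 := by
  rw [Fin.succAbove]
  split_ifs <;> simp_all [Fin.lt_def]

theorem Matrix.det_eq_mul_det_submatrix_castSucc_of_col_last {R : Type*} [CommRing R] {n : ℕ}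
    (M : Matrix (Fin (n + 1)) (Fin (n + 1)) R) (h : ∀ i ≠ Fin.last n, M i (Fin.last n) = 0) :
    M.det = M (Fin.last n) (Fin.last n) * (M.submatrix Fin.castSucc Fin.castSucc).det := by
  rw [det_succ_column M (Fin.last n),
    sum_eq_single (Fin.last n) (fun i _ hi => by simp [h i hi]) (by simp)]
  simp [← two_mul]

section ShiftMatrix

variable {R : Type*} [CommRing R]

def shiftMatrix (c : ℕ → R) (n : ℕ) : Matrix (Fin n) (Fin n) R :=
  of fun i j => if (j : ℕ) = i + 1 then 1 else if (j : ℕ) + 2 = i then c i else 0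

variable (c : ℕ → R) (z : R)

theorem charMatrix_shiftMatrix_apply {n : ℕ} (i j : Fin n) :
    (z • 1 - shiftMatrix c n) i j =
      if (j : ℕ) = i then z
      else if (j : ℕ) = i + 1 then -1
      else if (j : ℕ) + 2 = i then -c i
      else 0 := by
  simp only [Matrix.sub_apply, Matrix.smul_apply, one_apply, shiftMatrix, of_apply, smul_eq_mul,
    Fin.ext_iff]
  split_ifs <;> first | (exfalso; omega) | ring

theorem submatrix_castSucc_charMatrix_shiftMatrix (n : ℕ) :
    (z • 1 - shiftMatrix c (n + 1)).submatrix Fin.castSucc Fin.castSucc =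
      z • 1 - shiftMatrix c n := by
  ext i j
  simp only [submatrix_apply, charMatrix_shiftMatrix_apply, Fin.val_castSucc]

/-- Deleting the last column twice: each time its only nonzero entry is a `-1` in the last row. -/
theorem det_submatrix_last_succAbove_charMatrix_shiftMatrix (n : ℕ) :
    ((z • 1 - shiftMatrix c (n + 3)).submatrix (Fin.last (n + 2)).succAbove
      (Fin.last n).castSucc.castSucc.succAbove).det = (z • 1 - shiftMatrix c n).det := by
  rw [det_eq_mul_det_submatrix_castSucc_of_col_last, det_eq_mul_det_submatrix_castSucc_of_col_last,
    show (z • 1 - shiftMatrix c n).det = -1 * (-1 * (z • 1 - shiftMatrix c n).det) by ring]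
  · congr 2
    pick_goal 3
    congr 1
    ext i j
    all_goals
      simp only [submatrix_apply, charMatrix_shiftMatrix_apply, Fin.val_succAbove,
        Fin.val_castSucc, Fin.val_last]
      split_ifs <;> first | rfl | omega
  all_goals
    intro i hi
    have hi : (i : ℕ) ≠ _ := Fin.val_ne_of_ne hi
    simp only [submatrix_apply, charMatrix_shiftMatrix_apply, Fin.val_succAbove,
      Fin.val_castSucc, Fin.val_last] at hi ⊢
    split_ifs <;> first | rfl | omega

theorem det_charMatrix_shiftMatrix_add_three (n : ℕ) :
    (z • 1 - shiftMatrix c (n + 3)).det =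
      z * (z • 1 - shiftMatrix c (n + 2)).det - c (n + 2) * (z • 1 - shiftMatrix c n).det := by
  set A := z • 1 - shiftMatrix c (n + 3)
  set m : Fin (n + 3) := (Fin.last n).castSucc.castSucc
  have hrow : ∀ j ∉ ({m, Fin.last (n + 2)} : Finset _), A (Fin.last (n + 2)) j = 0 := by
    intro j hj
    simp only [mem_insert, mem_singleton, not_or, Fin.ext_iff] at hj
    simp only [A, charMatrix_shiftMatrix_apply, m, Fin.val_last, Fin.val_castSucc] at hj ⊢
    split_ifs <;> first | rfl | omega
  have hsign : ∀ k, (-1 : R) ^ (k + k) = 1 := fun k => Even.neg_one_pow ⟨k, rfl⟩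
  rw [det_succ_row A (Fin.last (n + 2)),
    ← sum_subset (subset_univ _) (fun j _ hj => by simp [hrow j hj]),
    sum_pair (show m ≠ Fin.last (n + 2) by simp [m, Fin.ext_iff]),
    det_submatrix_last_succAbove_charMatrix_shiftMatrix, Fin.succAbove_last,
    submatrix_castSucc_charMatrix_shiftMatrix]
  simp only [A, m, charMatrix_shiftMatrix_apply, Fin.val_last, Fin.val_castSucc,
    show n + 2 + n = (n + 1) + (n + 1) by ring, hsign]
  split_ifs <;> first | (exfalso; omega) | ring

theorem det_charMatrix_shiftMatrix_of_lt_three {n : ℕ} (hn : n < 3) :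
    (z • 1 - shiftMatrix c n).det = z ^ n := by
  interval_cases n
  · simp
  · simp only [det_fin_one, charMatrix_shiftMatrix_apply]
    simp
  · simp only [det_fin_two, charMatrix_shiftMatrix_apply]
    simp [sq]

theorem det_charMatrix_shiftMatrix_eq_of_recurrence (f : ℕ → R) (hf₀ : ∀ n < 3, f n = z ^ n)
    (hf : ∀ n, f (n + 3) = z * f (n + 2) - c (n + 2) * f n) (n : ℕ) :
    (z • 1 - shiftMatrix c n).det = f n := by
  induction n using Nat.strong_induction_on with
  | _ n ih =>
    rcases lt_or_ge n 3 with hn | hn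
    · rw [det_charMatrix_shiftMatrix_of_lt_three c z hn, hf₀ n hn]
    · obtain ⟨n, rfl⟩ := Nat.exists_eq_add_of_le' hn
      rw [det_charMatrix_shiftMatrix_add_three, hf, ih n (by omega), ih (n + 2) (by omega)]

end ShiftMatrix

theorem ghX_eq_shiftMatrix (N : ℕ) (t : ℂ) :
    ghX N t = shiftMatrix (fun i => -3 * t * i * (i - 1)) N :=
  rfl

/-- `N! / (N - 3k)!` is written as `N.descFactorial (3 * k)`, which vanishes for `3 * k > N`;
so summing over any range that contains `N / 3` gives `ghP N t z`. -/
noncomputable def ghSummand (N : ℕ) (t z : ℂ) (k : ℕ) : ℂ :=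
  N.descFactorial (3 * k) / k.factorial * t ^ k * z ^ (N - 3 * k)

theorem ghP_eq_sum_ghSummand {N M : ℕ} (hM : N / 3 < M) (t z : ℂ) :
    ghP N t z = ∑ k ∈ range M, ghSummand N t z k := by
  rw [ghP, mul_sum]
  refine sum_subset_zero_on_sdiff (range_subset_range.mpr hM) ?_ ?_
  · intro k hk
    obtain ⟨-, hk⟩ := mem_sdiff.mp hk
    simp only [mem_range, not_lt] at hk
    simp [ghSummand, Nat.descFactorial_eq_zero_iff_lt.mpr (by omega : N < 3 * k)]
  · intro k hk
    have hk : 3 * k ≤ N := by simp only [mem_range] at hk; omega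
    rw [ghSummand, ← Nat.factorial_mul_descFactorial hk]
    have := Nat.factorial_ne_zero (N - 3 * k)
    have := Nat.factorial_ne_zero k
    push_cast
    field_simp

theorem ghSummand_succ_zero (n : ℕ) (t z : ℂ) :
    ghSummand (n + 1) t z 0 = z * ghSummand n t z 0 := by
  simp [ghSummand, pow_succ']

theorem ghSummand_add_three_succ (n : ℕ) (t z : ℂ) (k : ℕ) :
    ghSummand (n + 3) t z (k + 1) =
      z * ghSummand (n + 2) t z (k + 1) + 3 * t * (n + 2) * (n + 1) * ghSummand n t z k := by
  have hcoef : ((n + 3).descFactorial (3 * k + 3) : ℂ) / (k + 1).factorial =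
      (n + 2).descFactorial (3 * k + 3) / (k + 1).factorial +
        3 * (n + 2) * (n + 1) * (n.descFactorial (3 * k) / k.factorial) := by
    have := Nat.factorial_ne_zero k
    rw [Nat.descFactorial_add_three, Nat.factorial_succ]
    push_cast
    field_simp
  have hpow := Nat.descFactorial_mul_pow_succ_sub (n + 2) (3 * k + 3) z
  rw [ghSummand, ghSummand, ghSummand, show 3 * (k + 1) = 3 * k + 3 by ring,
    show n + 3 - (3 * k + 3) = n + 2 + 1 - (3 * k + 3) by omega,
    show n - 3 * k = n + 2 + 1 - (3 * k + 3) by omega]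
  linear_combination (t ^ (k + 1) * z ^ (n + 2 + 1 - (3 * k + 3))) * hcoef +
    (t ^ (k + 1) / (k + 1).factorial) * hpow

theorem ghP_of_lt_three {N : ℕ} (hN : N < 3) (t z : ℂ) : ghP N t z = z ^ N := by
  have := Nat.factorial_ne_zero N
  simp only [ghP, Nat.div_eq_of_lt hN, zero_add, range_one, sum_singleton, pow_zero, mul_zero,
    tsub_zero, one_mul, Nat.factorial_zero, Nat.cast_one]
  field_simp

theorem ghP_add_three (n : ℕ) (t z : ℂ) :
    ghP (n + 3) t z = z * ghP (n + 2) t z + 3 * t * (n + 2) * (n + 1) * ghP n t z := by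
  rw [ghP_eq_sum_ghSummand (M := n + 3) (by omega), ghP_eq_sum_ghSummand (M := n + 3) (by omega),
    ghP_eq_sum_ghSummand (M := n + 2) (by omega), sum_range_succ', sum_range_succ' _ (n + 2),
    ghSummand_succ_zero (n + 2)]
  simp only [ghSummand_add_three_succ, sum_add_distrib, ← mul_sum]
  ring

theorem ghX_charpoly_general (N : ℕ) (t z : ℂ) :
    Matrix.det (z • (1 : Matrix (Fin N) (Fin N) ℂ) - ghX N t) = ghP N t z := by
  rw [ghX_eq_shiftMatrix]
  refine det_charMatrix_shiftMatrix_eq_of_recurrence _ z (fun n => ghP n t z)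
    (fun n hn => ghP_of_lt_three hn t z) (fun n => ?_) N
  rw [ghP_add_three]
  push_cast
  ring

/-- `det(z·I_N − X(t)) = P_N(t,z)`: the characteristic polynomial of `X(t)` is the
Gould-Hopper polynomial. -/
theorem ghX_charpoly (N : ℕ) (hN : 1 ≤ N) (t z : ℂ) :
    Matrix.det (z • (1 : Matrix (Fin N) (Fin N) ℂ) - ghX N t) = ghP N t z :=
  ghX_charpoly_general N t z
end

section
/- Fix N ≥ 1 and complex constants Γ_0 = 1, Γ_1, …, Γ_N, and define the polynomial A(λ) = ∑_{k=0}^N (Γ_k / k!) λ^k. Let (α_n)_{n≥0} be complex numbers such that A'(λ) = A(λ) · ∑_{n=0}^∞ α_n λ^n / n! as formal power series in λ. Define the 2D Appell polynomials by 𝔾_n(z,t) = ∑_{h=0}^n C(n, n−h) Γ_{n−h} P_h(t,z) for 0 ≤ n ≤ N, where C(a,b) is the binomial coefficient. Then 𝔾_0(z,t) = 1 and for every 1 ≤ n ≤ N the recurrence 𝔾_n(z,t) = (z + α_0) 𝔾_{n−1}(z,t) + 3t(n−1)(n−2) 𝔾_{n−3}(z,t) + ∑_{k=0}^{n−2} C(n−1,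 k) α_{n−k−1} 𝔾_k(z,t) holds for all complex z and t (with the convention 𝔾_{n−3} = 0 when n < 3). -/
/-- The 2D Appell polynomials `𝔾_n(z,t) = ∑_{h=0}^n C(n, n−h) Γ_{n−h} P_h(t,z)`. -/
noncomputable def appell2D (Γ : ℕ → ℂ) (n : ℕ) (z t : ℂ) : ℂ :=
  ∑ h ∈ Finset.range (n + 1), (n.choose (n - h) : ℂ) * Γ (n - h) * ghP h t z

/-!
The Gould–Hopper polynomials have exponential generating function `E = e^{tλ³} e^{zλ}`, so
`E' = (z + 3tλ²) E`. Since `𝔾_n` with `n ≤ N` only involves `Γ_0, …, Γ_N`, the `𝔾_n` are the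
exponential coefficients of `A E` up to order `N`, and `(A E)' = A' E + A E' = (B + z + 3tλ²) A E`
with `B = ∑ α_n λⁿ / n!`. Comparing coefficients of `λᵐ / m!` is the recurrence.
-/

open Finset PowerSeries
open scoped Nat

theorem Finset.sum_range_succ_ite_dvd {M : Type*} [AddCommMonoid M] {p : ℕ} (hp : 0 < p)
    (n : ℕ) (f : ℕ → M) :
    ∑ k ∈ range (n + 1), (if p ∣ k then f k else 0) = ∑ j ∈ range (n / p + 1), f (p * j) := by
  rw [← sum_filter]
  have himage : (range (n + 1)).filter (p ∣ ·) = (range (n / p + 1)).image (p * ·) := by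
    ext k
    simp only [mem_filter, mem_range, mem_image, Nat.lt_succ_iff]
    constructor
    · rintro ⟨hk, j, rfl⟩
      exact ⟨j, (Nat.le_div_iff_mul_le hp).2 (by linarith [Nat.mul_comm p j]), rfl⟩
    · rintro ⟨j, hj, rfl⟩
      exact ⟨(Nat.mul_le_mul_left p hj).trans (Nat.mul_div_le n p), dvd_mul_right p j⟩
  rw [himage, sum_image fun i _ j _ h => Nat.eq_of_mul_eq_mul_left hp h]

namespace PowerSeries

theorem derivative_rescale {R : Type*} [CommSemiring R] (a : R) (f : R⟦X⟧) :
    d⁄dX R (rescale a f) = C a * rescale a (d⁄dX R f) := by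
  ext n
  simp only [coeff_derivative, coeff_rescale, coeff_C_mul, pow_succ]
  ring

theorem derivative_expand {R : Type*} [CommRing R] (p : ℕ) (hp : p ≠ 0) (f : R⟦X⟧) :
    d⁄dX R (expand p hp f) = (p : R⟦X⟧) * X ^ (p - 1) * expand p hp (d⁄dX R f) := by
  rw [expand_apply, expand_apply, derivative_subst (HasSubst.X_pow hp), derivative_pow,
    derivative_X]
  ring

variable {K : Type*} [Field K]

noncomputable def egf (f : ℕ → K) : K⟦X⟧ := mk fun n => f n / n !

@[simp]
theorem coeff_egf (f : ℕ → K) (n : ℕ) : coeff n (egf f) = f n / n ! := coeff_mk _ _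

theorem egf_add (f g : ℕ → K) : egf f + egf g = egf fun n => f n + g n := by
  ext n
  simp [add_div]

theorem C_mul_egf (a : K) (f : ℕ → K) : C a * egf f = egf fun n => a * f n := by
  ext n
  simp [mul_div_assoc]

variable [CharZero K]

theorem egf_injective : Function.Injective (egf (K := K)) := by
  intro f g h
  funext n
  have := congrArg (coeff n) h
  rwa [coeff_egf, coeff_egf, div_left_inj' (Nat.cast_ne_zero.2 n.factorial_ne_zero)] at this

theorem egf_mul_egf (f g : ℕ → K) :
    egf f * egf g = egf fun n => ∑ k ∈ range (n + 1), (n.choose k : K) * f k * g (n - k) := by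
  ext n
  rw [coeff_mul, Nat.sum_antidiagonal_eq_sum_range_succ_mk, coeff_egf, sum_div]
  refine sum_congr rfl fun k hk => ?_
  have hn : (n ! : K) ≠ 0 := Nat.cast_ne_zero.2 n.factorial_ne_zero
  rw [coeff_egf, coeff_egf, Nat.cast_choose K (Nat.lt_succ_iff.1 (mem_range.1 hk))]
  field_simp

theorem derivative_egf (f : ℕ → K) : d⁄dX K (egf f) = egf fun n => f (n + 1) := by
  ext n
  rw [coeff_derivative, coeff_egf, coeff_egf, Nat.factorial_succ, Nat.cast_mul]
  field_simp
  push_cast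
  ring

theorem X_pow_mul_egf (k : ℕ) (f : ℕ → K) :
    X ^ k * egf f = egf fun n => (n.descFactorial k : K) * f (n - k) := by
  ext n
  rw [coeff_X_pow_mul', coeff_egf]
  split_ifs with hkn
  · have hd : (n.descFactorial k : K) ≠ 0 :=
      Nat.cast_ne_zero.2 (Nat.descFactorial_eq_zero_iff_lt.not.2 (not_lt.2 hkn))
    rw [coeff_egf, ← Nat.factorial_mul_descFactorial hkn, Nat.cast_mul]
    field_simp
  · rw [coeff_egf, Nat.descFactorial_eq_zero_iff_lt.2 (not_le.1 hkn)]
    simp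

end PowerSeries

theorem egf_ghP (t z : ℂ) :
    egf (ghP · t z) = expand 3 three_ne_zero (rescale t (exp ℂ)) * rescale z (exp ℂ) := by
  ext n
  rw [coeff_egf, ghP, mul_div_cancel_left₀ _ (Nat.cast_ne_zero.2 n.factorial_ne_zero), coeff_mul,
    Nat.sum_antidiagonal_eq_sum_range_succ_mk]
  simp only [coeff_expand, coeff_rescale, coeff_exp, ite_mul, zero_mul]
  rw [sum_range_succ_ite_dvd three_pos]
  refine sum_congr rfl fun k _ => ?_
  simp only [Nat.mul_div_cancel_left k three_pos, map_div₀, map_one, map_natCast]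
  ring

theorem derivative_egf_ghP (t z : ℂ) :
    d⁄dX ℂ (egf (ghP · t z)) = (C z + C (3 * t) * X ^ 2) * egf (ghP · t z) := by
  rw [egf_ghP, Derivation.leibniz, derivative_expand, derivative_rescale, derivative_rescale,
    derivative_exp, map_mul, expand_C, smul_eq_mul, smul_eq_mul, map_mul, map_ofNat,
    Nat.cast_ofNat]
  ring

theorem egf_mul_egf_ghP (Γ : ℕ → ℂ) (t z : ℂ) :
    egf Γ * egf (ghP · t z) = egf (appell2D Γ · z t) := by
  rw [egf_mul_egf]
  congr 1
  funext n
  rw [appell2D, ← sum_range_reflect]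
  refine sum_congr rfl fun k hk => ?_
  have hkn : k ≤ n := Nat.lt_succ_iff.1 (mem_range.1 hk)
  rw [Nat.add_sub_cancel, Nat.sub_sub_self hkn, Nat.choose_symm hkn]

theorem appell2D_congr {Γ Γ' : ℕ → ℂ} {n : ℕ} (h : ∀ j ≤ n, Γ j = Γ' j) (z t : ℂ) :
    appell2D Γ n z t = appell2D Γ' n z t :=
  sum_congr rfl fun k _ => by rw [h _ (Nat.sub_le n k)]

theorem appell2D_succ {Γ α : ℕ → ℂ} (hΓ : d⁄dX ℂ (egf Γ) = egf Γ * egf α) (z t : ℂ) (m : ℕ) :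
    appell2D Γ (m + 1) z t =
      ∑ k ∈ range (m + 1), (m.choose k : ℂ) * appell2D Γ k z t * α (m - k) +
        z * appell2D Γ m z t + 3 * t * (m.descFactorial 2 * appell2D Γ (m - 2) z t) := by
  have hG : d⁄dX ℂ (egf (appell2D Γ · z t)) = egf (appell2D Γ · z t) * egf α +
      C z * egf (appell2D Γ · z t) + C (3 * t) * (X ^ 2 * egf (appell2D Γ · z t)) := by
    rw [← egf_mul_egf_ghP, Derivation.leibniz, hΓ, derivative_egf_ghP, smul_eq_mul, smul_eq_mul]
    ring
  rw [derivative_egf, egf_mul_egf, C_mul_egf, X_pow_mul_egf, C_mul_egf, egf_add, egf_add] at hG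
  exact congrFun (egf_injective hG) m

theorem appell2D_recurrence_general (N : ℕ) (Γ : ℕ → ℂ) (hΓ0 : Γ 0 = 1)
    (α : ℕ → ℂ)
    (hα : ∀ n : ℕ,
      ((n : ℂ) + 1) * (if n + 1 ≤ N then Γ (n + 1) / ((n + 1).factorial : ℂ) else 0) =
        ∑ j ∈ Finset.range (n + 1),
          (if j ≤ N then Γ j / (j.factorial : ℂ) else 0) *
            (α (n - j) / ((n - j).factorial : ℂ))) :
    (∀ z t : ℂ, appell2D Γ 0 z t = 1) ∧
    (∀ n, 1 ≤ n → n ≤ N → ∀ z t : ℂ,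
      appell2D Γ n z t =
        (z + α 0) * appell2D Γ (n - 1) z t +
          3 * t * ((n : ℂ) - 1) * ((n : ℂ) - 2) *
            (if 3 ≤ n then appell2D Γ (n - 3) z t else 0) +
          ∑ k ∈ Finset.range (n - 1),
            ((n - 1).choose k : ℂ) * α (n - k - 1) * appell2D Γ k z t) := by
  refine ⟨fun z t => by simp [appell2D, ghP, hΓ0], fun n hn hnN z t => ?_⟩
  set ΓN : ℕ → ℂ := fun j => if j ≤ N then Γ j else 0
  have hΓN : d⁄dX ℂ (egf ΓN) = egf ΓN * egf α := by
    ext m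
    rw [coeff_derivative, coeff_mul, Nat.sum_antidiagonal_eq_sum_range_succ_mk]
    simpa only [coeff_egf, ΓN, ite_div, zero_div, mul_comm] using hα m
  have htrunc : ∀ k ≤ n, appell2D Γ k z t = appell2D ΓN k z t := fun k hk =>
    appell2D_congr (fun j hj => (if_pos (by omega)).symm) z t
  obtain ⟨m, rfl⟩ : ∃ m, n = m + 1 := ⟨n - 1, by omega⟩
  have hsum : ∑ k ∈ range m, (m.choose k : ℂ) * α (m + 1 - k - 1) * appell2D Γ k z t =
      ∑ k ∈ range m, (m.choose k : ℂ) * appell2D ΓN k z t * α (m - k) :=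
    sum_congr rfl fun k hk => by
      rw [htrunc k (by have := mem_range.1 hk; omega), Nat.sub_right_comm, Nat.add_sub_cancel]; ring
  have hcubic : 3 * t * (((m + 1 : ℕ) : ℂ) - 1) * (((m + 1 : ℕ) : ℂ) - 2) *
      (if 3 ≤ m + 1 then appell2D Γ (m + 1 - 3) z t else 0) =
      3 * t * (m.descFactorial 2 * appell2D ΓN (m - 2) z t) := by
    rcases lt_or_ge m 2 with hm | hm
    · interval_cases m <;> simp
    · rw [if_pos (by omega), Nat.add_sub_add_right m 1 2, htrunc _ (by omega)]
      obtain ⟨k, rfl⟩ : ∃ k, m = k + 2 := ⟨m - 2, by omega⟩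
      rw [Nat.succ_descFactorial_succ, Nat.descFactorial_one]
      push_cast
      ring
  rw [Nat.add_sub_cancel, hsum, hcubic, htrunc _ le_rfl, htrunc m (by omega), appell2D_succ hΓN,
    sum_range_succ, Nat.choose_self, Nat.sub_self]
  push_cast
  ring

/-- With `A(λ) = ∑_{k=0}^N (Γ_k/k!) λ^k`, `Γ_0 = 1`, and `(α_n)` defined by the formal
power series identity `A'(λ) = A(λ) · ∑_n α_n λ^n / n!` (stated here coefficient-wise),
the 2D Appell polynomials satisfy `𝔾_0 = 1` and, for `1 ≤ n ≤ N`, the recurrence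
`𝔾_n = (z+α_0) 𝔾_{n−1} + 3t(n−1)(n−2) 𝔾_{n−3} + ∑_{k=0}^{n−2} C(n−1,k) α_{n−k−1} 𝔾_k`
(with `𝔾_{n−3} = 0` when `n < 3`). -/
theorem appell2D_recurrence (N : ℕ) (hN : 1 ≤ N) (Γ : ℕ → ℂ) (hΓ0 : Γ 0 = 1)
    (α : ℕ → ℂ)
    (hα : ∀ n : ℕ,
      ((n : ℂ) + 1) * (if n + 1 ≤ N then Γ (n + 1) / ((n + 1).factorial : ℂ) else 0) =
        ∑ j ∈ Finset.range (n + 1),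
          (if j ≤ N then Γ j / (j.factorial : ℂ) else 0) *
            (α (n - j) / ((n - j).factorial : ℂ))) :
    (∀ z t : ℂ, appell2D Γ 0 z t = 1) ∧
    (∀ n, 1 ≤ n → n ≤ N → ∀ z t : ℂ,
      appell2D Γ n z t =
        (z + α 0) * appell2D Γ (n - 1) z t +
          3 * t * ((n : ℂ) - 1) * ((n : ℂ) - 2) *
            (if 3 ≤ n then appell2D Γ (n - 3) z t else 0) +
          ∑ k ∈ Finset.range (n - 1),
            ((n - 1).choose k : ℂ) * α (n - k - 1) * appell2D Γ k z t) :=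
  appell2D_recurrence_general N Γ hΓ0 α hα
end

section
/- Let D = {(z,w) ∈ ℂ² : 30z²w² + 1 ≠ 0} and define on D the rational functions U(z,w) = −240zw / (30z²w² + 1)², V(z,w) = (3600 w⁴z² − 120 w²) / (30z²w² + 1)², and V̂(z,w) = (3600 z⁴w² − 120 z²) / (30z²w² + 1)² (so that V̂(z,w) = V(w,z)). Then on D the stationary Novikov-Veselov equation holds as an identity of rational functions: ∂_z³ U + ∂_w³ U − 3 ∂_z(V·U) − 3 ∂_w(V̂·U) = 0, and moreover ∂_w V = ∂_z U. (Here w plays the role of z̄ and V̂ the role of V̄, so U is a stationary solution of the Novikov-Veselov equation with potential V.) -/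
/-!
All functions involved are rational with the single denominator `30z²w² + 1`. Since `U` is
symmetric and `V̂` is `V` with its variables exchanged, the `∂_w` half of the Novikov–Veselov
equation is the `∂_z` half with `z` and `w` exchanged, and the equation holds because each half
vanishes on its own: `∂_z³U = 3∂_z(VU)`. This identity and `∂_wV = ∂_zU` are checked by
explicit differentiation, the iterated derivative one step at a time on the open set where the
denominator does not vanish.
-/

/-- `U(z,w) = −240zw / (30z²w² + 1)²` (with `w` playing the role of `z̄`). -/
noncomputable def Unv (z w : ℂ) : ℂ := -240 * z * w / (30 * z ^ 2 * w ^ 2 + 1) ^ 2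

/-- `V(z,w) = (3600w⁴z² − 120w²) / (30z²w² + 1)²`. -/
noncomputable def Vnv (z w : ℂ) : ℂ :=
  (3600 * w ^ 4 * z ^ 2 - 120 * w ^ 2) / (30 * z ^ 2 * w ^ 2 + 1) ^ 2

/-- `V̂(z,w) = (3600z⁴w² − 120z²) / (30z²w² + 1)²` (the role of `V̄`). -/
noncomputable def Vnvhat (z w : ℂ) : ℂ :=
  (3600 * z ^ 4 * w ^ 2 - 120 * z ^ 2) / (30 * z ^ 2 * w ^ 2 + 1) ^ 2

section Calculus

variable {𝕜 : Type*} [NontriviallyNormedField 𝕜]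

theorem Set.EqOn.iteratedDeriv_succ {F : Type*} [NormedAddCommGroup F] [NormedSpace 𝕜 F]
    {n : ℕ} {f g g' : 𝕜 → F} {s : Set 𝕜} (hs : IsOpen s)
    (hfg : s.EqOn (iteratedDeriv n f) g) (hg : ∀ x ∈ s, HasDerivAt g (g' x) x) :
    s.EqOn (iteratedDeriv (n + 1) f) g' := by
  intro x hx
  rw [_root_.iteratedDeriv_succ, (hfg.eventuallyEq_of_mem (hs.mem_nhds hx)).deriv_eq]
  exact (hg x hx).deriv

theorem HasDerivAt.fun_div_pow {f q : 𝕜 → 𝕜} {f' q' x : 𝕜} (hf : HasDerivAt f f' x)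
    (hq : HasDerivAt q q' x) (hx : q x ≠ 0) (n : ℕ) :
    HasDerivAt (fun t => f t / q t ^ n) ((f' * q x - n * f x * q') / q x ^ (n + 1)) x := by
  refine (hf.div (hq.fun_pow n) (pow_ne_zero n hx)).congr_deriv ?_
  rcases n with _ | n
  · field_simp
    ring
  · field_simp
    push_cast
    ring

end Calculus

theorem Unv_comm (z w : ℂ) : Unv z w = Unv w z := by
  unfold Unv
  ring

theorem Vnvhat_eq_Vnv_swap (z w : ℂ) : Vnvhat z w = Vnv w z := by
  unfold Vnvhat Vnv
  ring

section Derivatives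

variable {z w : ℂ}

theorem hasDerivAt_denominator_left (z w : ℂ) :
    HasDerivAt (fun t : ℂ => 30 * t ^ 2 * w ^ 2 + 1) (60 * z * w ^ 2) z :=
  ((((hasDerivAt_pow 2 z).const_mul 30).mul_const (w ^ 2)).add_const 1).congr_deriv (by ring)

theorem hasDerivAt_Unv_left (h : 30 * z ^ 2 * w ^ 2 + 1 ≠ 0) :
    HasDerivAt (fun t => Unv t w)
      ((21600 * z ^ 2 * w ^ 3 - 240 * w) / (30 * z ^ 2 * w ^ 2 + 1) ^ 3) z :=
  ((((hasDerivAt_id' z).const_mul (-240)).mul_const w).fun_div_pow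
    (hasDerivAt_denominator_left z w) h 2).congr_deriv (by field_simp; ring)

theorem hasDerivAt_Unv_left_deriv (h : 30 * z ^ 2 * w ^ 2 + 1 ≠ 0) :
    HasDerivAt (fun t => (21600 * t ^ 2 * w ^ 3 - 240 * w) / (30 * t ^ 2 * w ^ 2 + 1) ^ 3)
      ((86400 * z * w ^ 3 - 2592000 * z ^ 3 * w ^ 5) / (30 * z ^ 2 * w ^ 2 + 1) ^ 4) z :=
  (((((hasDerivAt_pow 2 z).const_mul 21600).mul_const (w ^ 3)).sub_const (240 * w)).fun_div_pow
    (hasDerivAt_denominator_left z w) h 3).congr_deriv (by field_simp; ring)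

theorem hasDerivAt_Unv_left_deriv_deriv (h : 30 * z ^ 2 * w ^ 2 + 1 ≠ 0) :
    HasDerivAt
      (fun t => (86400 * t * w ^ 3 - 2592000 * t ^ 3 * w ^ 5) / (30 * t ^ 2 * w ^ 2 + 1) ^ 4)
      ((86400 * w ^ 3 - 25920000 * z ^ 2 * w ^ 5 + 388800000 * z ^ 4 * w ^ 7) /
        (30 * z ^ 2 * w ^ 2 + 1) ^ 5) z :=
  (((((hasDerivAt_id' z).const_mul 86400).mul_const (w ^ 3)).fun_sub
    (((hasDerivAt_pow 3 z).const_mul 2592000).mul_const (w ^ 5))).fun_div_pow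
    (hasDerivAt_denominator_left z w) h 4).congr_deriv (by field_simp; ring)

theorem hasDerivAt_Vnv_left (h : 30 * z ^ 2 * w ^ 2 + 1 ≠ 0) :
    HasDerivAt (fun t => Vnv t w)
      ((21600 * z * w ^ 4 - 216000 * z ^ 3 * w ^ 6) / (30 * z ^ 2 * w ^ 2 + 1) ^ 3) z :=
  ((((hasDerivAt_pow 2 z).const_mul (3600 * w ^ 4)).sub_const (120 * w ^ 2)).fun_div_pow
    (hasDerivAt_denominator_left z w) h 2).congr_deriv (by field_simp; ring)

theorem hasDerivAt_Vnv_mul_Unv_left (h : 30 * z ^ 2 * w ^ 2 + 1 ≠ 0) :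
    HasDerivAt (fun t => Vnv t w * Unv t w)
      ((28800 * w ^ 3 - 8640000 * z ^ 2 * w ^ 5 + 129600000 * z ^ 4 * w ^ 7) /
        (30 * z ^ 2 * w ^ 2 + 1) ^ 5) z :=
  ((hasDerivAt_Vnv_left h).mul (hasDerivAt_Unv_left h)).congr_deriv (by
    unfold Vnv Unv
    field_simp
    ring)

theorem hasDerivAt_Vnv_right (h : 30 * z ^ 2 * w ^ 2 + 1 ≠ 0) :
    HasDerivAt (fun t => Vnv z t)
      ((21600 * z ^ 2 * w ^ 3 - 240 * w) / (30 * z ^ 2 * w ^ 2 + 1) ^ 3) w :=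
  (((((hasDerivAt_pow 4 w).const_mul 3600).mul_const (z ^ 2)).fun_sub
    ((hasDerivAt_pow 2 w).const_mul 120)).fun_div_pow
    (((hasDerivAt_pow 2 w).const_mul (30 * z ^ 2)).add_const 1) h 2).congr_deriv
    (by field_simp; ring)

theorem iteratedDeriv_three_Unv_left (h : 30 * z ^ 2 * w ^ 2 + 1 ≠ 0) :
    iteratedDeriv 3 (fun t => Unv t w) z = 3 * deriv (fun t => Vnv t w * Unv t w) z := by
  set D := {t : ℂ | 30 * t ^ 2 * w ^ 2 + 1 ≠ 0}
  have hD : IsOpen D := isOpen_ne_fun (by fun_prop) continuous_const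
  have h₀ : D.EqOn (iteratedDeriv 0 fun t => Unv t w) fun t => Unv t w := fun _ _ => rfl
  have h₃ := ((h₀.iteratedDeriv_succ hD fun _ => hasDerivAt_Unv_left).iteratedDeriv_succ hD
    fun _ => hasDerivAt_Unv_left_deriv).iteratedDeriv_succ hD
    fun _ => hasDerivAt_Unv_left_deriv_deriv
  rw [h₃ h, (hasDerivAt_Vnv_mul_Unv_left h).deriv]
  ring

end Derivatives

/-- On the set `D` where `30z²w² + 1 ≠ 0`, the rational functions `U, V, V̂` satisfy
the stationary Novikov-Veselov equation
`∂_z³U + ∂_w³U − 3∂_z(VU) − 3∂_w(V̂U) = 0` together with `∂_w V = ∂_z U`, and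
`V̂(z,w) = V(w,z)`. -/
theorem stationary_NV_rational_solution :
    ∀ z w : ℂ, 30 * z ^ 2 * w ^ 2 + 1 ≠ 0 →
      (iteratedDeriv 3 (fun z' => Unv z' w) z + iteratedDeriv 3 (fun w' => Unv z w') w -
        3 * deriv (fun z' => Vnv z' w * Unv z' w) z -
        3 * deriv (fun w' => Vnvhat z w' * Unv z w') w = 0) ∧
      deriv (fun w' => Vnv z w') w = deriv (fun z' => Unv z' w) z ∧
      Vnvhat z w = Vnv w z := by
  intro z w h
  have h' : 30 * w ^ 2 * z ^ 2 + 1 ≠ 0 := by rwa [mul_right_comm]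
  have hU : (fun w' => Unv z w') = fun t => Unv t z := funext (Unv_comm z)
  have hVU : (fun w' => Vnvhat z w' * Unv z w') = fun t => Vnv t z * Unv t z :=
    funext fun t => by rw [Vnvhat_eq_Vnv_swap, Unv_comm]
  refine ⟨?_, ?_, Vnvhat_eq_Vnv_swap z w⟩
  · rw [hU, hVU, iteratedDeriv_three_Unv_left h, iteratedDeriv_three_Unv_left h']
    ring
  · rw [(hasDerivAt_Vnv_right h).deriv, (hasDerivAt_Unv_left h).deriv]
end
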